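/- Let ρ' ∈ ρℕ_{≥2} and R_ρ^{ρ'}(M) := B_{ρ'/2}(M) ∩ Δ_{ρ'}. If M ⊂ Δ_ρ is chain-connected with step ρ (any two points joined by a finite chain of points of M with consecutive ∞-distances equal to ρ), then R_ρ^{ρ'}(M) is chain-connected with step ρ'. -/

import Mathlib

/-- The grid Δ_ρ = ρℤ^d. -/
def grid (d : ℕ) (ρ : ℝ) : Set (Fin d → ℝ) := {x | ∀ i, ∃ k : ℤ, x i = ρ * k}

/-- Closed r-neighborhood of a set in the ∞-norm (the sup metric on `Fin d → ℝ`). -/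
def nbhd {d : ℕ} (r : ℝ) (M : Set (Fin d → ℝ)) : Set (Fin d → ℝ) :=
  {y | ∃ x ∈ M, dist y x ≤ r}

/-- Chain-connectedness with step ρ. -/
def ChainConnected (d : ℕ) (ρ : ℝ) (M : Set (Fin d → ℝ)) : Prop :=
  ∀ x ∈ M, ∀ z ∈ M, ∃ (n : ℕ) (y : ℕ → (Fin d → ℝ)), y 0 = x ∧ y n = z ∧
    (∀ k ≤ n, y k ∈ M) ∧ ∀ k < n, dist (y (k+1)) (y k) = ρ

/-!
Round every point of `M` coordinatewise to the nearest point of `Δ_{ρ'}`. The rounding moves a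
point by at most `ρ'/2`, so it lands in `R_ρ^{ρ'}(M)`, and it turns a `ρ`-step of `M` into a
displacement of less than `ρ'/2 + ρ + ρ'/2 < 2ρ'` between two points of `Δ_{ρ'}`; such a
displacement is either zero or of size exactly `ρ'`. A point of `R_ρ^{ρ'}(M)` lies within `ρ'/2`
of some `x ∈ M`, hence within `ρ'` of the rounding of `x`, which links it to the rounded chains.
-/

open Relation

/-- Only the endpoint `b` is required to lie in `M`; a chain starting in `M` then stays in `M`. -/
def chainStep {X : Type*} [Dist X] (ρ : ℝ) (M : Set X) (a b : X) : Prop :=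
  b ∈ M ∧ dist b a = ρ

section Chains

variable {X : Type*} [Dist X] {ρ : ℝ} {M : Set X}

lemma reflTransGen_chainStep_of_chain {n : ℕ} {y : ℕ → X} (hmem : ∀ k ≤ n, y k ∈ M)
    (hstep : ∀ k < n, dist (y (k + 1)) (y k) = ρ) :
    ∀ k ≤ n, ReflTransGen (chainStep ρ M) (y 0) (y k) := by
  intro k
  induction k with
  | zero => exact fun _ => .refl
  | succ k ih => exact fun hk => (ih (by omega)).tail ⟨hmem _ hk, hstep k hk⟩

lemma exists_chain_of_reflTransGen_chainStep {x z : X} (hx : x ∈ M)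
    (h : ReflTransGen (chainStep ρ M) x z) :
    ∃ (n : ℕ) (y : ℕ → X), y 0 = x ∧ y n = z ∧
      (∀ k ≤ n, y k ∈ M) ∧ ∀ k < n, dist (y (k + 1)) (y k) = ρ := by
  induction h with
  | refl => exact ⟨0, fun _ => x, rfl, rfl, fun _ _ => hx, fun _ hk => absurd hk (by omega)⟩
  | @tail b c _ hbc ih =>
    obtain ⟨n, y, h0, hn, hmem, hstep⟩ := ih
    refine ⟨n + 1, fun k => if k ≤ n then y k else c, by simp [h0], by simp, ?_, ?_⟩
    · intro k hk
      dsimp only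
      split_ifs with hkn
      exacts [hmem k hkn, hbc.1]
    · intro k hk
      rcases Nat.lt_succ_iff_lt_or_eq.mp hk with hkn | rfl
      · simp only [hkn.le, Nat.succ_le_of_lt hkn, if_true]
        exact hstep k hkn
      · simpa [hn] using hbc.2

end Chains

lemma chainConnected_iff_reflTransGen {d : ℕ} {ρ : ℝ} {M : Set (Fin d → ℝ)} :
    ChainConnected d ρ M ↔ ∀ x ∈ M, ∀ z ∈ M, ReflTransGen (chainStep ρ M) x z := by
  refine ⟨fun h x hx z hz => ?_,
    fun h x hx z hz => exists_chain_of_reflTransGen_chainStep hx (h x hx z hz)⟩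
  obtain ⟨n, y, rfl, rfl, hmem, hstep⟩ := h x hx z hz
  exact reflTransGen_chainStep_of_chain hmem hstep n le_rfl

lemma dist_mul_intCast_eq_zero_or_eq {ρ : ℝ} (hρ : 0 < ρ) {p q : ℤ}
    (h : dist (ρ * p) (ρ * q) < 2 * ρ) : dist (ρ * p) (ρ * q) = 0 ∨ dist (ρ * p) (ρ * q) = ρ := by
  have hdist : dist (ρ * p) (ρ * q) = ρ * ((|p - q| : ℤ) : ℝ) := by
    rw [Real.dist_eq, ← mul_sub, abs_mul, abs_of_pos hρ]
    push_cast
    rfl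
  rw [hdist] at h ⊢
  have : |p - q| < 2 := by
    have : ((|p - q| : ℤ) : ℝ) < 2 := lt_of_mul_lt_mul_left (by linarith) hρ.le
    exact_mod_cast this
  rcases (show |p - q| = 0 ∨ |p - q| = 1 by have := abs_nonneg (p - q); omega) with h' | h' <;>
    simp [h']

lemma eq_or_dist_eq_of_mem_grid {d : ℕ} {ρ : ℝ} (hρ : 0 < ρ) {u v : Fin d → ℝ}
    (hu : u ∈ grid d ρ) (hv : v ∈ grid d ρ) (huv : dist u v < 2 * ρ) :
    u = v ∨ dist u v = ρ := by
  have hcoord : ∀ i, dist (u i) (v i) = 0 ∨ dist (u i) (v i) = ρ := by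
    intro i
    obtain ⟨p, hp⟩ := hu i
    obtain ⟨q, hq⟩ := hv i
    have hi := (dist_le_pi_dist u v i).trans_lt huv
    rw [hp, hq] at hi ⊢
    exact dist_mul_intCast_eq_zero_or_eq hρ hi
  by_cases huv' : u = v
  · exact .inl huv'
  obtain ⟨i, hi⟩ := Function.ne_iff.mp huv'
  have hle : dist u v ≤ ρ :=
    (dist_pi_le_iff hρ.le).mpr fun j => (hcoord j).elim (fun h => h ▸ hρ.le) le_of_eq
  have hge : ρ ≤ dist u v :=
    ((hcoord i).resolve_left (dist_ne_zero.mpr hi)).symm.le.trans (dist_le_pi_dist u v i)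
  exact .inr (le_antisymm hle hge)

lemma reflTransGen_chainStep_of_mem_grid {d : ℕ} {ρ : ℝ} (hρ : 0 < ρ) {S : Set (Fin d → ℝ)}
    {u v : Fin d → ℝ} (hu : u ∈ grid d ρ) (hvS : v ∈ S) (hv : v ∈ grid d ρ)
    (huv : dist u v < 2 * ρ) : ReflTransGen (chainStep ρ S) u v := by
  rcases eq_or_dist_eq_of_mem_grid hρ hu hv huv with rfl | h
  · exact .refl
  · exact .single ⟨hvS, by rwa [dist_comm]⟩

noncomputable def roundToGrid {d : ℕ} (ρ : ℝ) (v : Fin d → ℝ) : Fin d → ℝ :=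
  fun i => ρ * round (v i / ρ)

section Rounding

variable {d : ℕ} {ρ : ℝ}

lemma roundToGrid_mem_grid (v : Fin d → ℝ) : roundToGrid ρ v ∈ grid d ρ :=
  fun i => ⟨round (v i / ρ), rfl⟩

lemma dist_roundToGrid_le (hρ : 0 < ρ) (v : Fin d → ℝ) : dist (roundToGrid ρ v) v ≤ ρ / 2 := by
  refine (dist_pi_le_iff (by positivity)).mpr fun i => ?_
  have hround : ρ * round (v i / ρ) - v i = ρ * (round (v i / ρ) - v i / ρ) := by field_simp
  rw [roundToGrid, Real.dist_eq, hround, abs_mul, abs_of_pos hρ, abs_sub_comm]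
  nlinarith [abs_sub_round (v i / ρ)]

lemma roundToGrid_mem_nbhd_inter_grid (hρ : 0 < ρ) {M : Set (Fin d → ℝ)} {v : Fin d → ℝ}
    (hv : v ∈ M) : roundToGrid ρ v ∈ nbhd (ρ / 2) M ∩ grid d ρ :=
  ⟨⟨v, hv, dist_roundToGrid_le hρ v⟩, roundToGrid_mem_grid v⟩

lemma reflTransGen_roundToGrid {ρ' : ℝ} (hρ : 0 < ρ) (hρρ' : ρ < ρ') {M : Set (Fin d → ℝ)}
    {x z : Fin d → ℝ} (h : ReflTransGen (chainStep ρ M) x z) :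
    ReflTransGen (chainStep ρ' (nbhd (ρ' / 2) M ∩ grid d ρ')) (roundToGrid ρ' x)
      (roundToGrid ρ' z) := by
  have hρ' : 0 < ρ' := hρ.trans hρρ'
  refine ReflTransGen.lift' (roundToGrid ρ') (fun a b hab => ?_) x z h
  obtain ⟨hb, hab⟩ := hab
  refine reflTransGen_chainStep_of_mem_grid hρ' (roundToGrid_mem_grid a)
    (roundToGrid_mem_nbhd_inter_grid hρ' hb) (roundToGrid_mem_grid b) ?_
  calc dist (roundToGrid ρ' a) (roundToGrid ρ' b)
      ≤ dist (roundToGrid ρ' a) a + dist a b + dist b (roundToGrid ρ' b) := dist_triangle4 _ _ _ _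
    _ ≤ ρ' / 2 + ρ + ρ' / 2 := by
        gcongr
        · exact dist_roundToGrid_le hρ' a
        · rw [dist_comm, hab]
        · rw [dist_comm]; exact dist_roundToGrid_le hρ' b
    _ < 2 * ρ' := by linarith

end Rounding

theorem restriction_preserves_chainConnected_general (d : ℕ) (ρ ρ' : ℝ) (hρ : 0 < ρ)
    (m : ℕ) (hm : 2 ≤ m) (hρ' : ρ' = ρ * m)
    (M : Set (Fin d → ℝ))
    (hcc : ChainConnected d ρ M) :
    ChainConnected d ρ' (nbhd (ρ'/2) M ∩ grid d ρ') := by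
  have hρρ' : ρ < ρ' := by
    have : (2 : ℝ) ≤ m := by exact_mod_cast hm
    nlinarith
  have hρ'pos : 0 < ρ' := hρ.trans hρρ'
  rw [chainConnected_iff_reflTransGen] at hcc ⊢
  rintro y ⟨⟨x, hx, hyx⟩, hy⟩ z ⟨⟨x', hx', hzx'⟩, hz⟩
  have hx_round := roundToGrid_mem_nbhd_inter_grid hρ'pos hx
  have near : ∀ {u v w : Fin d → ℝ}, dist u v ≤ ρ' / 2 → dist v w ≤ ρ' / 2 → dist u w < 2 * ρ' :=
    fun huv hvw => (dist_triangle _ _ _).trans_lt (by linarith)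
  have hy_x : ReflTransGen _ y (roundToGrid ρ' x) :=
    reflTransGen_chainStep_of_mem_grid hρ'pos hy hx_round hx_round.2
      (near hyx (by rw [dist_comm]; exact dist_roundToGrid_le hρ'pos x))
  have hx'_z : ReflTransGen _ (roundToGrid ρ' x') z :=
    reflTransGen_chainStep_of_mem_grid hρ'pos (roundToGrid_mem_grid x')
      (show z ∈ nbhd (ρ' / 2) M ∩ grid d ρ' from ⟨⟨x', hx', hzx'⟩, hz⟩) hz
      (near (dist_roundToGrid_le hρ'pos x') (by rw [dist_comm]; exact hzx'))
  exact hy_x.trans ((reflTransGen_roundToGrid hρ hρρ' (hcc x hx x' hx')).trans hx'_z)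

theorem restriction_preserves_chainConnected (d : ℕ) (ρ ρ' : ℝ) (hρ : 0 < ρ)
    (m : ℕ) (hm : 2 ≤ m) (hρ' : ρ' = ρ * m)
    (M : Set (Fin d → ℝ)) (hM : M ⊆ grid d ρ) (hMne : M.Nonempty)
    (hcc : ChainConnected d ρ M) :
    ChainConnected d ρ' (nbhd (ρ'/2) M ∩ grid d ρ') :=
  restriction_preserves_chainConnected_general d ρ ρ' hρ m hm hρ' M hcc
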